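/- arXiv:2305.08137 — 2 statements merged into one kernel-verified Lean document; each statement's English description precedes it below -/
import Mathlib

section
/- For all θ ∈ [0, 2π], the point L(t_θ) = (R_0 − 2r + V_T t_θ)(sin θ, cos θ), after expanding radially a distance V_T(t_{2π} − t_θ), remains within distance R_0 − r + V_T t_{2π} of the point (0, r). Equivalently, |L(t_θ) − (0,r)| + V_T(t_{2π} − t_θ) ≤ R_0 − r + V_T t_{2π}. -/
/-! The point `L(t_θ)` lies on the circle of radius `a = R₀ - 2r + V_T t_θ` about the origin,
so by the triangle inequality it is within `a + r` of `(0, r)`; and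
`a + r + V_T (t_{2π} - t_θ) = R₀ - r + V_T t_{2π}` exactly. -/

open Real

theorem sqrt_sq_mul_sin_add_sq_mul_cos_sub_le (a r θ : ℝ) :
    √((a * sin θ) ^ 2 + (a * cos θ - r) ^ 2) ≤ |a| + |r| := by
  have hcross : -(a * r * cos θ) ≤ |a| * |r| := by
    calc -(a * r * cos θ) ≤ |a * r * cos θ| := neg_le_abs _
      _ = |a| * |r| * |cos θ| := by rw [abs_mul, abs_mul]
      _ ≤ |a| * |r| := mul_le_of_le_one_right (by positivity) (abs_cos_le_one θ)
  rw [sqrt_le_left (by positivity)]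
  nlinarith [sin_sq_add_cos_sq θ, sq_abs a, sq_abs r]

theorem drifting_spiral_confinement_general (Vs VT R0 r : ℝ) (hr : 0 < r)
    (hR : 2 * r < R0) (hVT : 0 < VT) :
    ∀ θ ∈ Set.Icc (0 : ℝ) (2 * Real.pi),
      Real.sqrt
          (((R0 - 2 * r + VT * ((R0 - r) *
                (Real.exp (θ * VT / Real.sqrt (Vs ^ 2 - VT ^ 2)) - 1) / VT)) *
              Real.sin θ) ^ 2 +
            ((R0 - 2 * r + VT * ((R0 - r) *
                (Real.exp (θ * VT / Real.sqrt (Vs ^ 2 - VT ^ 2)) - 1) / VT)) *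
              Real.cos θ - r) ^ 2) +
        VT * ((R0 - r) *
              (Real.exp (2 * Real.pi * VT / Real.sqrt (Vs ^ 2 - VT ^ 2)) - 1) / VT
            - (R0 - r) *
              (Real.exp (θ * VT / Real.sqrt (Vs ^ 2 - VT ^ 2)) - 1) / VT) ≤
      R0 - r + VT * ((R0 - r) *
          (Real.exp (2 * Real.pi * VT / Real.sqrt (Vs ^ 2 - VT ^ 2)) - 1) / VT) := by
  rintro θ ⟨hθ, -⟩
  set E := exp (θ * VT / √(Vs ^ 2 - VT ^ 2)) - 1
  have hE : 0 ≤ E := sub_nonneg.2 (one_le_exp (by positivity))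
  have hcancel (x : ℝ) : VT * (x / VT) = x := mul_div_cancel₀ x hVT.ne'
  simp only [mul_sub, hcancel]
  have hdist := sqrt_sq_mul_sin_add_sq_mul_cos_sub_le (R0 - 2 * r + (R0 - r) * E) r θ
  rw [abs_of_nonneg (by nlinarith), abs_of_pos hr] at hdist
  linarith

/-- Confinement in the drifting spiral sweep: for all `θ ∈ [0, 2π]`, the point
`L(t_θ) = (R_0 − 2r + V_T t_θ)(sin θ, cos θ)`, after expanding radially a
distance `V_T (t_{2π} − t_θ)`, remains within distance `R_0 − r + V_T t_{2π}`
of the point `(0, r)`. -/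
theorem drifting_spiral_confinement (Vs VT R0 r : ℝ) (hr : 0 < r)
    (hR : 2 * r < R0) (hVT : 0 < VT) (hV : VT < Vs) :
    ∀ θ ∈ Set.Icc (0 : ℝ) (2 * Real.pi),
      Real.sqrt
          (((R0 - 2 * r + VT * ((R0 - r) *
                (Real.exp (θ * VT / Real.sqrt (Vs ^ 2 - VT ^ 2)) - 1) / VT)) *
              Real.sin θ) ^ 2 +
            ((R0 - 2 * r + VT * ((R0 - r) *
                (Real.exp (θ * VT / Real.sqrt (Vs ^ 2 - VT ^ 2)) - 1) / VT)) *
              Real.cos θ - r) ^ 2) +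
        VT * ((R0 - r) *
              (Real.exp (2 * Real.pi * VT / Real.sqrt (Vs ^ 2 - VT ^ 2)) - 1) / VT
            - (R0 - r) *
              (Real.exp (θ * VT / Real.sqrt (Vs ^ 2 - VT ^ 2)) - 1) / VT) ≤
      R0 - r + VT * ((R0 - r) *
          (Real.exp (2 * Real.pi * VT / Real.sqrt (Vs ^ 2 - VT ^ 2)) - 1) / VT) :=
  drifting_spiral_confinement_general Vs VT R0 r hr hR hVT
end

section
/- If R_0/r > √(4/(ln 2)² + 1/π²), then the universal lower bound speed V_LB = π R_0 V_T / r satisfies V_LB > V_T √(4π²/(ln 2)² + 1); consequently any sweeper moving at speed V_s ≥ V_LB automatically satisfies the end-game condition r(e^{2π V_T/√(V_s² − V_T²)} − 1) < 2r. -/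
/-!
Multiplying the ratio hypothesis by `π V_T` gives `V_LB > V_T √(4π²/(ln 2)² + 1)`. For
`V_s ≥ V_LB`, squaring turns this into `√(V_s² − V_T²) > 2π V_T / ln 2`, so the exponent
`2π V_T / √(V_s² − V_T²)` is below `ln 2` and `e^{…} − 1 < 1`.
-/

open Real

theorem sqrt_div_add_inv_sq (a b : ℝ) {p : ℝ} (hp : 0 < p) :
    √(a / b + 1 / p ^ 2) = √(a * p ^ 2 / b + 1) / p := by
  rw [show a / b + 1 / p ^ 2 = (a * p ^ 2 / b + 1) / p ^ 2 by field_simp,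
    sqrt_div' _ (by positivity), sqrt_sq hp.le]

theorem mul_div_sqrt_sq_sub_sq_lt {a w v L : ℝ} (hw : 0 ≤ w) (hL : 0 < L)
    (hv : w * √(a ^ 2 / L ^ 2 + 1) < v) :
    a * w / √(v ^ 2 - w ^ 2) < L := by
  have hsq : (a * w / L) ^ 2 < v ^ 2 - w ^ 2 := by
    have hw' : 0 ≤ w * √(a ^ 2 / L ^ 2 + 1) := by positivity
    have h := pow_lt_pow_left₀ hv hw' two_ne_zero
    rw [mul_pow, sq_sqrt (by positivity)] at h
    rw [div_pow]
    linarith [show w ^ 2 * (a ^ 2 / L ^ 2 + 1) = (a * w) ^ 2 / L ^ 2 + w ^ 2 by ring]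
  have hroot : |a * w / L| < √(v ^ 2 - w ^ 2) := by
    rw [← sqrt_sq_eq_abs]
    exact sqrt_lt_sqrt (sq_nonneg _) hsq
  have hpos : 0 < √(v ^ 2 - w ^ 2) := (abs_nonneg _).trans_lt hroot
  rw [div_lt_iff₀ hpos]
  calc a * w = a * w / L * L := by field_simp
    _ ≤ |a * w / L| * L := by gcongr; exact le_abs_self _
    _ < √(v ^ 2 - w ^ 2) * L := by gcongr
    _ = L * √(v ^ 2 - w ^ 2) := mul_comm _ _

theorem lower_bound_implies_end_game_general (VT R0 r : ℝ) (hVT : 0 < VT) (hr : 0 < r)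
    (hratio : R0 / r > Real.sqrt (4 / (Real.log 2) ^ 2 + 1 / Real.pi ^ 2)) :
    Real.pi * R0 * VT / r > VT * Real.sqrt (4 * Real.pi ^ 2 / (Real.log 2) ^ 2 + 1) ∧
    ∀ Vs : ℝ, Vs ≥ Real.pi * R0 * VT / r →
      r * (Real.exp (2 * Real.pi * VT / Real.sqrt (Vs ^ 2 - VT ^ 2)) - 1) < 2 * r := by
  rw [sqrt_div_add_inv_sq _ _ pi_pos, gt_iff_lt, div_lt_iff₀ pi_pos] at hratio
  have hVLB : VT * √(4 * π ^ 2 / log 2 ^ 2 + 1) < π * R0 * VT / r :=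
    calc VT * √(4 * π ^ 2 / log 2 ^ 2 + 1) < VT * (R0 / r * π) :=
          mul_lt_mul_of_pos_left hratio hVT
      _ = π * R0 * VT / r := by ring
  refine ⟨hVLB, fun Vs hVs => ?_⟩
  have harg : 2 * π * VT / √(Vs ^ 2 - VT ^ 2) < log 2 :=
    mul_div_sqrt_sq_sub_sq_lt hVT.le (log_pos one_lt_two)
      (by rw [show (2 * π) ^ 2 = 4 * π ^ 2 by ring]; linarith)
  have hexp : exp (2 * π * VT / √(Vs ^ 2 - VT ^ 2)) < 2 := by
    simpa only [exp_log two_pos] using exp_lt_exp.mpr harg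
  nlinarith

/-- If `R_0/r > √(4/(ln 2)² + 1/π²)`, then the universal lower bound
`V_LB = π R_0 V_T/r` exceeds `V_T √(4π²/(ln 2)² + 1)`, and consequently any
sweeper speed `V_s ≥ V_LB` satisfies the end-game condition
`r(e^{2π V_T/√(V_s² − V_T²)} − 1) < 2r`. -/
theorem lower_bound_implies_end_game (VT R0 r : ℝ) (hVT : 0 < VT) (hr : 0 < r)
    (hR0 : 0 < R0)
    (hratio : R0 / r > Real.sqrt (4 / (Real.log 2) ^ 2 + 1 / Real.pi ^ 2)) :
    Real.pi * R0 * VT / r > VT * Real.sqrt (4 * Real.pi ^ 2 / (Real.log 2) ^ 2 + 1) ∧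
    ∀ Vs : ℝ, Vs ≥ Real.pi * R0 * VT / r →
      r * (Real.exp (2 * Real.pi * VT / Real.sqrt (Vs ^ 2 - VT ^ 2)) - 1) < 2 * r :=
  lower_bound_implies_end_game_general VT R0 r hVT hr hratio
end
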